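/- arXiv:2604.03461 — 3 statements merged into one kernel-verified Lean document; each statement's English description precedes it below -/
import Mathlib

section
/- Let n be a natural number, let x be an invertible n×n real matrix (a unit of the matrix ring), let f and η be n×n real matrices with f*η = η*f, and let a be any n×n real matrix. Then (↑x * Matrix.exp(η) * Matrix.exp(f))⁻¹ * (↑x * Matrix.exp(f) * a) = Matrix.exp(−η) * a, where the inverse is the matrix inverse (the left factor is invertible since x, exp(η), exp(f) are all invertible). In particular, the invariant state error E = x̂⁻¹ x_attacked is independent of the dynamics f. (Proposition 2: if the historical detector drift η commutes with the one-step dynamics f, the equivariant observer's invariant error, and hence its innovation, is identical to that of the nominal trajectory.) -/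
/-- The matrix exponential on `n × n` real matrices. -/
noncomputable def Matrix.exp {n : ℕ} (A : Matrix (Fin n) (Fin n) ℝ) :
    Matrix (Fin n) (Fin n) ℝ :=
  NormedSpace.exp A

/-- Proposition 2: if the detector drift `η` commutes with the one-step dynamics `f`,
the equivariant observer's invariant state error
`E = (x · exp(η) · exp(f))⁻¹ · (x · exp(f) · a) = exp(-η) · a`
is independent of the dynamics `f`. -/
theorem invariant_error_independent_of_dynamics (n : ℕ)
    (x : (Matrix (Fin n) (Fin n) ℝ)ˣ) (f η a : Matrix (Fin n) (Fin n) ℝ)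
    (hcomm : f * η = η * f) :
    ((x : Matrix (Fin n) (Fin n) ℝ) * Matrix.exp η * Matrix.exp f)⁻¹ * ((x : Matrix (Fin n) (Fin n) ℝ) * Matrix.exp f * a)
      = Matrix.exp (-η) * a := by
  simp only [Matrix.exp]
  have hdx : IsUnit ((x : Matrix (Fin n) (Fin n) ℝ)).det :=
    (Matrix.isUnit_iff_isUnit_det _).mp x.isUnit
  have hxinv : ((x : Matrix (Fin n) (Fin n) ℝ))⁻¹ * (x : Matrix (Fin n) (Fin n) ℝ) = 1 :=
    Matrix.nonsing_inv_mul _ hdx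
  have hdf : IsUnit (NormedSpace.exp f).det :=
    (Matrix.isUnit_iff_isUnit_det _).mp (Matrix.isUnit_exp f)
  have hfinv : (NormedSpace.exp f)⁻¹ * NormedSpace.exp f = 1 :=
    Matrix.nonsing_inv_mul _ hdf
  have hc : NormedSpace.exp f * NormedSpace.exp (-η)
      = NormedSpace.exp (-η) * NormedSpace.exp f :=
    by
    have hC : Commute f η := hcomm
    exact (hC.neg_right.exp)
  rw [Matrix.mul_inv_rev, Matrix.mul_inv_rev, ← Matrix.exp_neg η]
  calc (NormedSpace.exp f)⁻¹ * (NormedSpace.exp (-η) * ((x : Matrix (Fin n) (Fin n) ℝ))⁻¹) *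
        ((x : Matrix (Fin n) (Fin n) ℝ) * NormedSpace.exp f * a)
      = (NormedSpace.exp f)⁻¹ * NormedSpace.exp (-η) *
        ((((x : Matrix (Fin n) (Fin n) ℝ))⁻¹ * (x : Matrix (Fin n) (Fin n) ℝ)) *
          (NormedSpace.exp f * a)) := by noncomm_ring
    _ = (NormedSpace.exp f)⁻¹ * (NormedSpace.exp (-η) * NormedSpace.exp f) * a := by
        rw [hxinv, one_mul]; noncomm_ring
    _ = ((NormedSpace.exp f)⁻¹ * NormedSpace.exp f) * (NormedSpace.exp (-η) * a) := by
        rw [← hc]; noncomm_ring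
    _ = NormedSpace.exp (-η) * a := by rw [hfinv, one_mul]
end

section
/- Let e_f, e_l, e_θ be the 3×3 real matrices e_f = the matrix with 1 in entry (0,2) and 0 elsewhere, e_l = the matrix with 1 in entry (1,2) and 0 elsewhere, and e_θ = the matrix with −1 in entry (0,1), 1 in entry (1,0), and 0 elsewhere. Let v, ω ∈ ℝ with ω ≠ 0, and set F = v•e_f + ω•e_θ. Then for all real a, b, c, the matrix X = a•e_f + b•e_l + c•e_θ commutes with F (i.e., F*X = X*F) if and only if b = 0 and ω*a = v*c; equivalently, X commutes with F if and only if X = c•((v/ω)•e_f + e_θ) for some c ∈ ℝ. (For curved Dubins motion the invariant subspace Δ_{f_e} = ker[f_e,·] collapses to the one-dimensional span of (v/ω)e_f + e_θ, displacements strictly along the trajectory.) -/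
/-- Forward-translation generator of `se(2)`. -/
def eF : Matrix (Fin 3) (Fin 3) ℝ := !![0, 0, 1; 0, 0, 0; 0, 0, 0]

/-- Lateral-translation generator of `se(2)`. -/
def eL : Matrix (Fin 3) (Fin 3) ℝ := !![0, 0, 0; 0, 0, 1; 0, 0, 0]

/-- Rotation (heading) generator of `se(2)`. -/
def eTh : Matrix (Fin 3) (Fin 3) ℝ := !![0, -1, 0; 1, 0, 0; 0, 0, 0]

lemma key (v ω a b c : ℝ) (hω : ω ≠ 0) :
      (v • eF + ω • eTh) * (a • eF + b • eL + c • eTh)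
        = (a • eF + b • eL + c • eTh) * (v • eF + ω • eTh)
      ↔ b = 0 ∧ ω * a = v * c := by
  constructor
  · intro h
    have h01 := congrFun (congrFun h 0) 2
    have h12 := congrFun (congrFun h 1) 2
    simp [eF, eL, eTh, Matrix.mul_apply, Fin.sum_univ_three, Matrix.add_apply, Matrix.smul_apply, Matrix.vecHead, Matrix.vecTail] at h01 h12
    exact ⟨h01.resolve_left hω, by rw [h12]; ring⟩
  · rintro ⟨hb, hac⟩
    subst hb
    ext i j
    fin_cases i <;> fin_cases j <;>
      simp [eF, eL, eTh, Matrix.mul_apply, Fin.sum_univ_three, Matrix.add_apply, Matrix.smul_apply, Matrix.vecHead, Matrix.vecTail] <;>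
      nlinarith [hac]

/-- For curved Dubins motion (`ω ≠ 0`), the invariant subspace `Δ_{f_e} = ker [f_e, ·]`
collapses to the one-dimensional span of `(v/ω) e_f + e_θ`: `X = a e_f + b e_l + c e_θ`
commutes with `F = v e_f + ω e_θ` iff `b = 0 ∧ ω a = v c`, equivalently iff
`X = c' ((v/ω) e_f + e_θ)` for some `c'`. -/
theorem curved_motion_invariant_subspace (v ω : ℝ) (hω : ω ≠ 0) :
    (∀ a b c : ℝ,
      (v • eF + ω • eTh) * (a • eF + b • eL + c • eTh)
        = (a • eF + b • eL + c • eTh) * (v • eF + ω • eTh)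
      ↔ b = 0 ∧ ω * a = v * c) ∧
    (∀ a b c : ℝ,
      (v • eF + ω • eTh) * (a • eF + b • eL + c • eTh)
        = (a • eF + b • eL + c • eTh) * (v • eF + ω • eTh)
      ↔ ∃ c' : ℝ, a • eF + b • eL + c • eTh = c' • ((v / ω) • eF + eTh)) := by
  refine ⟨fun a b c => key v ω a b c hω, fun a b c => ?_⟩
  rw [key v ω a b c hω]
  constructor
  · rintro ⟨hb, hac⟩
    refine ⟨c, ?_⟩
    subst hb
    have ha : a = c * (v / ω) := by field_simp; nlinarith [hac]
    ext i j
    fin_cases i <;> fin_cases j <;>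
      simp [eF, eL, eTh, Matrix.add_apply, Matrix.smul_apply, Matrix.vecHead, Matrix.vecTail, ha]
  · rintro ⟨c', h⟩
    have h02 := congrFun (congrFun h 0) 2
    have h12 := congrFun (congrFun h 1) 2
    have h10 := congrFun (congrFun h 1) 0
    simp [eF, eL, eTh, Matrix.add_apply, Matrix.smul_apply, Matrix.vecHead, Matrix.vecTail] at h02 h12 h10
    refine ⟨h12, ?_⟩
    subst h10
    rw [h02]; field_simp
end

section
/- For real p_f, p_l, p_θ, let M be the 3×3 real matrix with rows (cos p_θ, −sin p_θ, p_l), (sin p_θ, cos p_θ, −p_f), (0, 0, 1), and let r = Real.sqrt(p_f^2 + p_l^2). Then the ℓ²→ℓ² operator norm of M (the norm of M as a linear map on Euclidean space ℝ³, i.e., its largest singular value) equals (r + Real.sqrt(r^2 + 4))/2. (The induced 2-norm of the SE(2) Adjoint matrix, which bounds the amplification ‖Ad_g ρ‖ ≤ ε‖Ad_g‖ of an ε-bounded bracket-violating attack residual in Theorem 1.) -/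
/-- Coordinate matrix of the Adjoint action of the `SE(2)` element with translation
`(p_f, p_l)` and heading `p_θ`, in the basis `(e_f, e_l, e_θ)` of `se(2)`. -/
noncomputable def AdMat (pf pl pθ : ℝ) : Matrix (Fin 3) (Fin 3) ℝ :=
  !![Real.cos pθ, -Real.sin pθ, pl;
     Real.sin pθ,  Real.cos pθ, -pf;
     0, 0, 1]

lemma se2_key_ineq (r σ pf pl u1 u2 b : ℝ) (hσ0 : 0 < σ) (hr0 : 0 ≤ r)
    (hr2 : r^2 = pf^2+pl^2) (hσsq : σ^2 = r*σ+1) :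
    (u1 + pl*b)^2 + (u2 - pf*b)^2 + b^2 ≤ σ^2 * (u1^2 + u2^2 + b^2) := by
  rcases eq_or_lt_of_le hr0 with hre | hrpos
  · have hpf : pf = 0 := by nlinarith [sq_nonneg pf, sq_nonneg pl]
    have hpl : pl = 0 := by nlinarith [sq_nonneg pf, sq_nonneg pl]
    have hσe : σ = 1 := by nlinarith
    rw [hpf, hpl, hσe]; exact le_of_eq (by ring)
  · have hkey : r*σ*(σ^2*(u1^2+u2^2+b^2) - ((u1+pl*b)^2+(u2-pf*b)^2+b^2))
        = σ^2*(pf*u1+pl*u2)^2 + (σ*(pl*u1-pf*u2) - r*b)^2 := by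
      linear_combination (r*σ*(u1^2+u2^2) + (r*σ + r^2)*b^2) * hσsq
        + (σ^2*(u1^2+u2^2) + r*σ*b^2) * hr2
    nlinarith [hkey, mul_nonneg (sq_nonneg σ) (sq_nonneg (pf*u1 + pl*u2)),
      sq_nonneg (σ*(pl*u1 - pf*u2) - r*b), mul_pos hrpos hσ0]

lemma se2_normsq_apply (pf pl pθ : ℝ) (x : Fin 3 → ℝ) :
    ‖Matrix.toEuclideanCLM (𝕜 := ℝ) (AdMat pf pl pθ) ((WithLp.equiv 2 _).symm x)‖ ^ 2
      = (Real.cos pθ * x 0 - Real.sin pθ * x 1 + pl * x 2)^2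
        + (Real.sin pθ * x 0 + Real.cos pθ * x 1 - pf * x 2)^2 + (x 2)^2 := by
  rw [WithLp.equiv_symm_apply, Matrix.toEuclideanCLM_toLp, EuclideanSpace.norm_eq,
    Real.sq_sqrt (by positivity)]
  simp [AdMat, Matrix.mulVec, dotProduct, Fin.sum_univ_three]
  ring

lemma se2_normsq_vec (x : Fin 3 → ℝ) :
    ‖((WithLp.equiv 2 (Fin 3 → ℝ)).symm x : EuclideanSpace ℝ (Fin 3))‖ ^ 2
      = x 0 ^ 2 + x 1 ^ 2 + x 2 ^ 2 := by
  rw [EuclideanSpace.norm_eq, Real.sq_sqrt (by positivity)]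
  simp [Fin.sum_univ_three]

lemma se2_lower_bound (pf pl pθ σ : ℝ) (hσ0 : 0 ≤ σ) (v : Fin 3 → ℝ)
    (hv : 0 < v 0 ^ 2 + v 1 ^ 2 + v 2 ^ 2)
    (h : (Real.cos pθ * v 0 - Real.sin pθ * v 1 + pl * v 2)^2
        + (Real.sin pθ * v 0 + Real.cos pθ * v 1 - pf * v 2)^2 + (v 2)^2
        = σ^2 * (v 0 ^ 2 + v 1 ^ 2 + v 2 ^ 2)) :
    σ ≤ ‖Matrix.toEuclideanCLM (𝕜 := ℝ) (AdMat pf pl pθ)‖ := by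
  have hxn : ‖((WithLp.equiv 2 (Fin 3 → ℝ)).symm v : EuclideanSpace ℝ (Fin 3))‖ ^ 2
      = v 0 ^ 2 + v 1 ^ 2 + v 2 ^ 2 := se2_normsq_vec v
  have hxpos : 0 < ‖((WithLp.equiv 2 (Fin 3 → ℝ)).symm v : EuclideanSpace ℝ (Fin 3))‖ := by
    nlinarith [norm_nonneg ((WithLp.equiv 2 (Fin 3 → ℝ)).symm v : EuclideanSpace ℝ (Fin 3))]
  have hMx : ‖Matrix.toEuclideanCLM (𝕜 := ℝ) (AdMat pf pl pθ)
      ((WithLp.equiv 2 (Fin 3 → ℝ)).symm v)‖ ^ 2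
      = (σ * ‖((WithLp.equiv 2 (Fin 3 → ℝ)).symm v : EuclideanSpace ℝ (Fin 3))‖) ^ 2 := by
    rw [se2_normsq_apply, mul_pow, hxn, h]
  have heq := congrArg Real.sqrt hMx
  rw [Real.sqrt_sq (norm_nonneg _),
    Real.sqrt_sq (mul_nonneg hσ0 (norm_nonneg _))] at heq
  have hle := (Matrix.toEuclideanCLM (𝕜 := ℝ) (AdMat pf pl pθ)).le_opNorm
    ((WithLp.equiv 2 (Fin 3 → ℝ)).symm v)
  rw [heq] at hle
  exact le_of_mul_le_mul_right hle hxpos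

/-- The `ℓ² → ℓ²` operator norm (largest singular value) of the `SE(2)` Adjoint
matrix equals `(r + √(r² + 4))/2` with `r = √(p_f² + p_l²)`. -/
theorem se2_adjoint_operator_norm (pf pl pθ : ℝ) :
    ‖Matrix.toEuclideanCLM (𝕜 := ℝ) (AdMat pf pl pθ)‖
      = (Real.sqrt (pf ^ 2 + pl ^ 2)
          + Real.sqrt (Real.sqrt (pf ^ 2 + pl ^ 2) ^ 2 + 4)) / 2 := by
  set c := Real.cos pθ with hc
  set sn := Real.sin pθ with hsn
  have hpyth : sn ^ 2 + c ^ 2 = 1 := Real.sin_sq_add_cos_sq pθ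
  set r := Real.sqrt (pf ^ 2 + pl ^ 2) with hrdef
  have hr0 : 0 ≤ r := Real.sqrt_nonneg _
  have hr2 : r ^ 2 = pf ^ 2 + pl ^ 2 := Real.sq_sqrt (by positivity)
  set s := Real.sqrt (r ^ 2 + 4) with hsdef
  have hs2 : s ^ 2 = r ^ 2 + 4 := Real.sq_sqrt (by positivity)
  have hs0 : 0 ≤ s := Real.sqrt_nonneg _
  set σ := (r + s) / 2 with hσdef
  have hσ1 : 1 ≤ σ := by
    have : 2 ≤ s := by nlinarith
    rw [hσdef]; linarith
  have hσ0 : 0 < σ := by linarith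
  have hσsq : σ ^ 2 = r * σ + 1 := by rw [hσdef]; nlinarith
  apply le_antisymm
  · -- upper bound
    apply ContinuousLinearMap.opNorm_le_bound _ (le_of_lt hσ0)
    intro x
    obtain ⟨y, rfl⟩ : ∃ y : Fin 3 → ℝ, (WithLp.equiv 2 (Fin 3 → ℝ)).symm y = x :=
      ⟨WithLp.equiv 2 _ x, by simp⟩
    have hsq : ‖Matrix.toEuclideanCLM (𝕜 := ℝ) (AdMat pf pl pθ)
        ((WithLp.equiv 2 (Fin 3 → ℝ)).symm y)‖ ^ 2
        ≤ (σ * ‖((WithLp.equiv 2 (Fin 3 → ℝ)).symm y : EuclideanSpace ℝ (Fin 3))‖) ^ 2 := by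
      rw [se2_normsq_apply, mul_pow, se2_normsq_vec]
      have hA : y 0 ^ 2 + y 1 ^ 2 + y 2 ^ 2
          = (c * y 0 - sn * y 1) ^ 2 + (sn * y 0 + c * y 1) ^ 2 + y 2 ^ 2 := by
        linear_combination (- y 0 ^ 2 - y 1 ^ 2) * hpyth
      rw [hA]
      exact se2_key_ineq r σ pf pl (c * y 0 - sn * y 1) (sn * y 0 + c * y 1) (y 2)
        hσ0 hr0 hr2 hσsq
    have h := Real.sqrt_le_sqrt hsq
    rwa [Real.sqrt_sq (norm_nonneg _), Real.sqrt_sq (by positivity)] at h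
  · -- lower bound
    rcases eq_or_lt_of_le hr0 with hre | hrpos
    · have hpf : pf = 0 := by nlinarith [sq_nonneg pf, sq_nonneg pl]
      have hpl : pl = 0 := by nlinarith [sq_nonneg pf, sq_nonneg pl]
      apply se2_lower_bound pf pl pθ σ (le_of_lt hσ0) ![0, 0, 1]
      · norm_num [Matrix.cons_val_two, Matrix.tail_cons, Matrix.head_cons]
      · have hσe : σ = 1 := by nlinarith
        simp only [Matrix.cons_val_zero, Matrix.cons_val_one, Matrix.head_cons,
          Matrix.cons_val_two, Matrix.tail_cons]
        rw [hpf, hpl, hσe, ← hc, ← hsn]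
        ring
    · apply se2_lower_bound pf pl pθ σ (le_of_lt hσ0)
        ![c*pl - sn*pf, -(sn*pl) - c*pf, r*σ]
      · simp only [Matrix.cons_val_zero, Matrix.cons_val_one, Matrix.head_cons,
          Matrix.cons_val_two, Matrix.tail_cons]
        have e2 : (c*pl - sn*pf)^2 + (-(sn*pl) - c*pf)^2 = r^2 := by
          linear_combination (pf^2+pl^2) * hpyth - hr2
        nlinarith [e2, mul_pos (mul_pos hrpos hσ0) (mul_pos hrpos hσ0),
          mul_pos hrpos hrpos]
      · simp only [Matrix.cons_val_zero, Matrix.cons_val_one, Matrix.head_cons,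
          Matrix.cons_val_two, Matrix.tail_cons]
        rw [← hc, ← hsn]
        have e0 : c*(c*pl - sn*pf) - sn*(-(sn*pl) - c*pf) = pl := by
          linear_combination pl * hpyth
        have e1 : sn*(c*pl - sn*pf) + c*(-(sn*pl) - c*pf) = -pf := by
          linear_combination (-pf) * hpyth
        have e2 : (c*pl - sn*pf)^2 + (-(sn*pl) - c*pf)^2 = r^2 := by
          linear_combination (pf^2+pl^2) * hpyth - hr2
        rw [e0, e1, e2]
        linear_combination (-(1+r*σ)^2) * hr2 + (-(r^2*(σ^2+r*σ+1))) * hσsq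
end
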